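/- Almost even strings satisfy a unique-parsing (cancellation) property: if x, u are almost even strings and xy = uv (as concatenations, with y, v arbitrary strings), then x = u and y = v. -/
import Mathlib


inductive Letter : Type
  | a | b
deriving DecidableEq

open Letter

def alpha (x : List Letter) : ℕ := x.count Letter.a
def beta (x : List Letter) : ℕ := x.count Letter.b

/-- x is "almost even": nonempty, α(x) = β(x)+1, and every proper prefix u has α(u) ≤ β(u). -/
def AE (x : List Letter) : Prop :=
  x ≠ [] ∧ alpha x = beta x + 1 ∧ ∀ u : List Letter, u <+: x → u ≠ x → alpha u ≤ beta u

theorem stmt3 (x u y v : List Letter) (hx : AE x) (hu : AE u)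
    (h : x ++ y = u ++ v) : x = u ∧ y = v := by
  have hpre : x <+: u ∨ u <+: x := by
    rcases le_or_gt x.length u.length with hl | hl
    · exact Or.inl (List.prefix_of_prefix_length_le ⟨y, h⟩ (u.prefix_append v) hl)
    · exact Or.inr (List.prefix_of_prefix_length_le ⟨v, h.symm⟩ (x.prefix_append y) hl.le)
  have hxu : x = u := by
    rcases hpre with hp | hp
    · by_contra hne
      have h1 := hu.2.2 x hp hne
      have h2 := hx.2.1
      omega
    · by_contra hne
      have h1 := hx.2.2 u hp (fun e => hne e.symm)
      have h2 := hu.2.1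
      omega
  subst hxu
  exact ⟨rfl, List.append_cancel_left h⟩
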